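/- arXiv:1111.3217 — 5 statements merged into one kernel-verified Lean document; each statement's English description precedes it below -/
import Mathlib

section
/- Let S = (S,+,⋆) be a finite semifield of characteristic p with identity e and spread set C, and let N_m = {b ∈ S : (a⋆b)⋆c = a⋆(b⋆c) for all a,c ∈ S} be its middle nucleus. Then the map b ↦ φ_b is a bijection from N_m onto the middle-nucleus set N_m(C) = {μ ∈ End_{F_p}(S) : φ∘μ ∈ C for all φ ∈ C}. -/
/-- A finite presemifield of characteristic `p`: a (nontrivial, finite) `ZMod p`-vector
space equipped with a multiplication that is additive (equivalently, `ZMod p`-linear)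
in each argument and has no zero divisors.  For `y : S`, the map `mul.flip y` is the
right-multiplication map `φ_y : x ↦ x ⋆ y`, so the spread set is `Set.range mul.flip`. -/
structure Presemifield (p : ℕ) (S : Type*) [AddCommGroup S] [Module (ZMod p) S] where
  mul : S →ₗ[ZMod p] S →ₗ[ZMod p] S
  eq_zero_or_eq_zero : ∀ x y : S, mul x y = 0 → x = 0 ∨ y = 0

/-- The spread set `C = {φ_y : y ∈ S}` of a presemifield. -/
def Presemifield.spread {p : ℕ} {S : Type*} [AddCommGroup S] [Module (ZMod p) S]
    (M : Presemifield p S) : Set (S →ₗ[ZMod p] S) :=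
  Set.range M.mul.flip

/-- The middle-nucleus set `N_m(D) = {μ : φ∘μ ∈ D for all φ ∈ D}`. -/
def middleNucleusSet {p : ℕ} {S : Type*} [AddCommGroup S] [Module (ZMod p) S]
    (D : Set (S →ₗ[ZMod p] S)) : Set (S →ₗ[ZMod p] S) :=
  {μ | ∀ φ ∈ D, φ ∘ₗ μ ∈ D}

theorem middleNucleusSet_subset_self {p : ℕ} {S : Type*} [AddCommGroup S] [Module (ZMod p) S]
    {D : Set (S →ₗ[ZMod p] S)} (hD : LinearMap.id ∈ D) : middleNucleusSet D ⊆ D :=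
  fun _ hμ => hμ _ hD

namespace Presemifield

variable {p : ℕ} {S : Type*} [AddCommGroup S] [Module (ZMod p) S] (M : Presemifield p S) {e : S}

theorem flip_injective (he : ∀ x : S, M.mul e x = x) : Function.Injective M.mul.flip :=
  fun _ _ h => by simpa only [LinearMap.flip_apply, he] using LinearMap.congr_fun h e

theorem flip_eq_id (he : ∀ x : S, M.mul x e = x) : M.mul.flip e = LinearMap.id :=
  LinearMap.ext he

theorem flip_mem_middleNucleusSet_spread_iff (he : ∀ x : S, M.mul e x = x) {b : S} :
    M.mul.flip b ∈ middleNucleusSet M.spread ↔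
      ∀ a c : S, M.mul (M.mul a b) c = M.mul a (M.mul b c) := by
  constructor
  · intro hb a c
    obtain ⟨d, hd⟩ := hb (M.mul.flip c) ⟨c, rfl⟩
    -- evaluating `φ_c ∘ φ_b = φ_d` at the left identity forces `d = b ⋆ c`
    have hd_eq : d = M.mul b c := by
      simpa only [LinearMap.comp_apply, LinearMap.flip_apply, he] using LinearMap.congr_fun hd e
    simpa only [LinearMap.comp_apply, LinearMap.flip_apply, hd_eq] using
      (LinearMap.congr_fun hd a).symm
  · rintro hb _ ⟨c, rfl⟩
    exact ⟨M.mul b c, LinearMap.ext fun a => (hb a c).symm⟩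

end Presemifield

theorem statement2_general (p : ℕ)
    (S : Type*) [AddCommGroup S] [Module (ZMod p) S]
    (M : Presemifield p S) (e : S)
    (he₁ : ∀ x : S, M.mul e x = x) (he₂ : ∀ x : S, M.mul x e = x) :
    Set.BijOn (fun b : S => M.mul.flip b)
      {b : S | ∀ a c : S, M.mul (M.mul a b) c = M.mul a (M.mul b c)}
      (middleNucleusSet M.spread) := by
  refine ⟨fun b hb => (M.flip_mem_middleNucleusSet_spread_iff he₁).2 hb,
    (M.flip_injective he₁).injOn, fun μ hμ => ?_⟩
  obtain ⟨b, rfl⟩ := middleNucleusSet_subset_self (M.flip_eq_id he₂ ▸ ⟨e, rfl⟩) hμ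
  exact ⟨b, (M.flip_mem_middleNucleusSet_spread_iff he₁).1 hμ, rfl⟩

theorem statement2 (p : ℕ) [Fact p.Prime]
    (S : Type*) [AddCommGroup S] [Module (ZMod p) S] [Finite S] [Nontrivial S]
    (M : Presemifield p S) (e : S)
    (he₁ : ∀ x : S, M.mul e x = x) (he₂ : ∀ x : S, M.mul x e = x) :
    Set.BijOn (fun b : S => M.mul.flip b)
      {b : S | ∀ a c : S, M.mul (M.mul a b) c = M.mul a (M.mul b c)}
      (middleNucleusSet M.spread) :=
  statement2_general p S M e he₁ he₂
end

section
/- Let S = (F_{p^n},+,⋆) be a finite presemifield with x⋆y = F(x,y) additive in each argument, let F_q be a subfield of F_{p^n}, and suppose there exists a field automorphism τ of F_q such that F(λx,y) = F(x, τ(λ)y) for all x,y ∈ F_{p^n} and all λ ∈ F_q. Then for every λ ∈ F_q the scalar map t_λ : x ↦ λx belongs to the middle-nucleus set N_m(C) = {μ ∈ End_{F_p}(F_{p^n}) : φ∘μ ∈ C for all φ ∈ C}, and every element of N_m(C) is F_q-linear. -/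
/-!
`φ_y ∘ t_λ = φ_{τ(λ) y}`, so every `t_λ` lies in the middle nucleus. The middle
nucleus is a subring of the endomorphism ring whose nonzero elements are injective (a kernel
vector of `μ` would force `φ_y ∘ μ = φ_0 = 0`), so it is a finite domain, hence a field by
Wedderburn's little theorem. In particular it is commutative, so each of its elements commutes
with every `t_λ`, which is `F_q`-linearity.
-/

namespace Presemifield

theorem mulLeft_mem_middleNucleusSet {p : ℕ} {S : Type*} [Ring S] [Algebra (ZMod p) S]
    {M : Presemifield p S} {a b : S} (h : ∀ x y, M.mul (a * x) y = M.mul x (b * y)) :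
    LinearMap.mulLeft (ZMod p) a ∈ middleNucleusSet M.spread := by
  rintro _ ⟨y, rfl⟩
  exact ⟨b * y, LinearMap.ext fun x => (h x y).symm⟩

variable {p : ℕ} {S : Type*} [AddCommGroup S] [Module (ZMod p) S] (M : Presemifield p S)

def middleNucleus : Subring (Module.End (ZMod p) S) where
  carrier := middleNucleusSet M.spread
  one_mem' φ hφ := hφ
  mul_mem' {μ ν} hμ hν φ hφ := hν _ (hμ φ hφ)
  zero_mem' φ _ := ⟨0, by ext; simp⟩
  add_mem' {μ ν} hμ hν φ hφ := by
    obtain ⟨y, hy⟩ := hμ φ hφ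
    obtain ⟨z, hz⟩ := hν φ hφ
    exact ⟨y + z, by rw [map_add, hy, hz, LinearMap.comp_add]⟩
  neg_mem' {μ} hμ φ hφ := by
    obtain ⟨y, hy⟩ := hμ φ hφ
    exact ⟨-y, by rw [map_neg, hy, LinearMap.comp_neg]⟩

variable {M}

theorem eq_zero_of_mem_middleNucleusSet_of_apply_eq_zero [Nontrivial S] {μ : Module.End (ZMod p) S}
    (hμ : μ ∈ middleNucleusSet M.spread) {z : S} (hz : z ≠ 0) (hμz : μ z = 0) : μ = 0 := by
  obtain ⟨y, hy⟩ := exists_ne (0 : S)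
  obtain ⟨w, hw⟩ := hμ (M.mul.flip y) ⟨y, rfl⟩
  have hmul (x : S) : M.mul x w = M.mul (μ x) y := LinearMap.congr_fun hw x
  have hw0 : w = 0 :=
    (M.eq_zero_or_eq_zero z w (by rw [hmul, hμz, map_zero, LinearMap.zero_apply])).resolve_left hz
  ext x
  exact (M.eq_zero_or_eq_zero _ y (by rw [← hmul, hw0, map_zero])).resolve_right hy

instance [Nontrivial S] : IsDomain M.middleNucleus :=
  have : NoZeroDivisors M.middleNucleus := ⟨fun {μ ν} hμν => by
    refine or_iff_not_imp_right.mpr fun hν => ?_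
    obtain ⟨x, hx⟩ : ∃ x, ν.1 x ≠ 0 := by
      by_contra! h
      exact hν (Subtype.ext (LinearMap.ext h))
    exact Subtype.ext (eq_zero_of_mem_middleNucleusSet_of_apply_eq_zero μ.2 hx
      (LinearMap.congr_fun (congrArg Subtype.val hμν) x))⟩
  NoZeroDivisors.to_isDomain _

theorem commute_of_mem_middleNucleusSet [Finite S] [Nontrivial S] {μ ν : Module.End (ZMod p) S}
    (hμ : μ ∈ middleNucleusSet M.spread) (hν : ν ∈ middleNucleusSet M.spread) : μ * ν = ν * μ := by
  have : Finite (Module.End (ZMod p) S) := .of_injective _ DFunLike.coe_injective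
  exact congrArg Subtype.val
    ((Finite.isDomain_to_isField M.middleNucleus).mul_comm ⟨μ, hμ⟩ ⟨ν, hν⟩)

end Presemifield

theorem statement8_general (p n : ℕ) [Fact p.Prime]
    (M : Presemifield p (GaloisField p n))
    (K : Subfield (GaloisField p n)) (τ : K ≃+* K)
    (hτ : ∀ (l : K) (x y : GaloisField p n),
      M.mul ((l : GaloisField p n) * x) y = M.mul x ((τ l : GaloisField p n) * y)) :
    (∀ l : K, LinearMap.mulLeft (ZMod p) (l : GaloisField p n) ∈
      middleNucleusSet M.spread) ∧
    (∀ μ ∈ middleNucleusSet M.spread, ∀ (l : K) (x : GaloisField p n),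
      μ ((l : GaloisField p n) * x) = (l : GaloisField p n) * μ x) := by
  have hmulLeft (l : K) := Presemifield.mulLeft_mem_middleNucleusSet (hτ l)
  refine ⟨hmulLeft, fun μ hμ l x => ?_⟩
  exact LinearMap.congr_fun (Presemifield.commute_of_mem_middleNucleusSet hμ (hmulLeft l)) x

theorem statement8 (p n : ℕ) [Fact p.Prime] (hn : n ≠ 0)
    (M : Presemifield p (GaloisField p n))
    (K : Subfield (GaloisField p n)) (τ : K ≃+* K)
    (hτ : ∀ (l : K) (x y : GaloisField p n),
      M.mul ((l : GaloisField p n) * x) y = M.mul x ((τ l : GaloisField p n) * y)) :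
    (∀ l : K, LinearMap.mulLeft (ZMod p) (l : GaloisField p n) ∈
      middleNucleusSet M.spread) ∧
    (∀ μ ∈ middleNucleusSet M.spread, ∀ (l : K) (x : GaloisField p n),
      μ ((l : GaloisField p n) * x) = (l : GaloisField p n) * μ x) :=
  statement8_general p n M K τ hτ
end

section
/- Let S1 = (F_{p^n},+,•) and S2 = (F_{p^n},+,⋆) be finite presemifields and let g1, g2, g3 be bijective F_p-linear maps of F_{p^n}. Then (g1,g2,g3) is an isotopism between S1 and S2 if and only if (ḡ3⁻¹, g2, ḡ1⁻¹) is an isotopism between the transpose presemifields S1^t and S2^t, where ḡ denotes the adjoint of g with respect to the trace form ⟨x,y⟩ = Tr_{F_{p^n}/F_p}(xy). -/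
/-!
Write `φ_y` and `φ'_y` for right multiplication by `y` in `S₂` and `S₁`. Pairing with the trace form,
`φ_{g₂ y} ∘ g₁ = g₃ ∘ φ'_y` says `⟨ḡ₃⁻¹ u, φ_{g₂ y}(g₁ v)⟩ = ⟨ḡ₃⁻¹ u, g₃(φ'_y v)⟩` for all `u, v`
(as `ḡ₃⁻¹` is onto). Moving every map across the form turns this into
`⟨φ̄_{g₂ y}(ḡ₃⁻¹ u), g₁ v⟩ = ⟨ḡ₁⁻¹(φ̄'_y u), g₁ v⟩`, which by nondegeneracy and surjectivity of `g₁`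
is the corresponding identity for the transposes.
-/

namespace LinearMap

variable {R M : Type*} [CommRing R] [AddCommGroup M] [Module R M] {B : LinearMap.BilinForm R M}

theorem SeparatingLeft.eq_of_forall_apply_eq (hB : B.SeparatingLeft) {a b : M}
    (h : ∀ z, B a z = B b z) : a = b :=
  ker_eq_bot.mp (separatingLeft_iff_ker_eq_bot.mp hB) (LinearMap.ext h)

theorem SeparatingRight.eq_of_forall_apply_eq (hB : B.SeparatingRight) {a b : M}
    (h : ∀ z, B z a = B z b) : a = b :=
  ker_eq_bot.mp (separatingRight_iff_flip_ker_eq_bot.mp hB) (LinearMap.ext h)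

namespace BilinForm

variable {adj : (M →ₗ[R] M) → (M →ₗ[R] M)}

theorem apply_symm_apply_of_coe_eq_adj (hadj : ∀ φ x y, B x (φ y) = B (adj φ x) y)
    {g h : M ≃ₗ[R] M} (hh : (h : M →ₗ[R] M) = adj g) (u v : M) :
    B (h.symm u) (g v) = B u v := by
  simpa [← hh] using hadj g (h.symm u) v

theorem intertwine_iff_adj_intertwine (hB : B.Nondegenerate)
    (hadj : ∀ φ x y, B x (φ y) = B (adj φ x) y) {A C : M →ₗ[R] M}
    {g₁ g₃ h₁ h₃ : M ≃ₗ[R] M} (hh₁ : (h₁ : M →ₗ[R] M) = adj g₁)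
    (hh₃ : (h₃ : M →ₗ[R] M) = adj g₃) :
    (∀ v, A (g₁ v) = g₃ (C v)) ↔ ∀ u, adj A (h₃.symm u) = h₁.symm (adj C u) := by
  have pairing_eq (u v : M) :
      (B (adj A (h₃.symm u)) (g₁ v) = B (h₁.symm (adj C u)) (g₁ v)) ↔
        B (h₃.symm u) (A (g₁ v)) = B (h₃.symm u) (g₃ (C v)) := by
    rw [← hadj, apply_symm_apply_of_coe_eq_adj hadj hh₁, ← hadj,
      apply_symm_apply_of_coe_eq_adj hadj hh₃]
  constructor
  · intro hAC u
    refine hB.1.eq_of_forall_apply_eq fun z ↦ ?_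
    obtain ⟨v, rfl⟩ := g₁.surjective z
    rw [pairing_eq, hAC]
  · intro hAC v
    refine hB.2.eq_of_forall_apply_eq fun z ↦ ?_
    obtain ⟨u, rfl⟩ := h₃.symm.surjective z
    rw [← pairing_eq, hAC]

end BilinForm

end LinearMap

theorem statement13_general (p n : ℕ) [Fact p.Prime]
    (M1 M2 : Presemifield p (GaloisField p n))
    (g1 g2 g3 : GaloisField p n ≃ₗ[ZMod p] GaloisField p n)
    -- `adj φ` is the adjoint `φ̄` of `φ` with respect to the trace form
    -- `⟨x,y⟩ = Tr_{F_{p^n}/F_p}(x·y)`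
    (adj : (GaloisField p n →ₗ[ZMod p] GaloisField p n) →
      (GaloisField p n →ₗ[ZMod p] GaloisField p n))
    (hadj : ∀ (φ : GaloisField p n →ₗ[ZMod p] GaloisField p n) (x y : GaloisField p n),
      Algebra.trace (ZMod p) (GaloisField p n) (x * φ y) =
        Algebra.trace (ZMod p) (GaloisField p n) (adj φ x * y))
    -- `h1 = ḡ1` and `h3 = ḡ3` as invertible maps, so that `h1.symm = ḡ1⁻¹`,
    -- `h3.symm = ḡ3⁻¹`
    (h1 h3 : GaloisField p n ≃ₗ[ZMod p] GaloisField p n)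
    (hh1 : (h1 : GaloisField p n →ₗ[ZMod p] GaloisField p n) = adj g1)
    (hh3 : (h3 : GaloisField p n →ₗ[ZMod p] GaloisField p n) = adj g3) :
    (∀ x y : GaloisField p n, M2.mul (g1 x) (g2 y) = g3 (M1.mul x y)) ↔
      (∀ x y : GaloisField p n,
        adj (M2.mul.flip (g2 y)) (h3.symm x) = h1.symm (adj (M1.mul.flip y) x)) := by
  refine forall_comm.trans ((forall_congr' fun y ↦ ?_).trans forall_comm)
  exact LinearMap.BilinForm.intertwine_iff_adj_intertwine (A := M2.mul.flip (g2 y))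
    (C := M1.mul.flip y) (traceForm_nondegenerate _ _) hadj hh1 hh3

theorem statement13 (p n : ℕ) [Fact p.Prime] (hn : n ≠ 0)
    (M1 M2 : Presemifield p (GaloisField p n))
    (g1 g2 g3 : GaloisField p n ≃ₗ[ZMod p] GaloisField p n)
    -- `adj φ` is the adjoint `φ̄` of `φ` with respect to the trace form
    -- `⟨x,y⟩ = Tr_{F_{p^n}/F_p}(x·y)`
    (adj : (GaloisField p n →ₗ[ZMod p] GaloisField p n) →
      (GaloisField p n →ₗ[ZMod p] GaloisField p n))
    (hadj : ∀ (φ : GaloisField p n →ₗ[ZMod p] GaloisField p n) (x y : GaloisField p n),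
      Algebra.trace (ZMod p) (GaloisField p n) (x * φ y) =
        Algebra.trace (ZMod p) (GaloisField p n) (adj φ x * y))
    -- `h1 = ḡ1` and `h3 = ḡ3` as invertible maps, so that `h1.symm = ḡ1⁻¹`,
    -- `h3.symm = ḡ3⁻¹`
    (h1 h3 : GaloisField p n ≃ₗ[ZMod p] GaloisField p n)
    (hh1 : (h1 : GaloisField p n →ₗ[ZMod p] GaloisField p n) = adj g1)
    (hh3 : (h3 : GaloisField p n →ₗ[ZMod p] GaloisField p n) = adj g3) :
    (∀ x y : GaloisField p n, M2.mul (g1 x) (g2 y) = g3 (M1.mul x y)) ↔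
      (∀ x y : GaloisField p n,
        adj (M2.mul.flip (g2 y)) (h3.symm x) = h1.symm (adj (M1.mul.flip y) x)) :=
  statement13_general p n M1 M2 g1 g2 g3 adj hadj h1 h3 hh1 hh3
end

section
/- Let F_q be a subfield of F_{p^n} and let S1 = (F_{p^n},+,•) and S2 = (F_{p^n},+,⋆) be finite presemifields whose multiplications are F_q-bilinear (equivalently, whose spread sets are contained in End_{F_q}(F_{p^n})). If (g1,g2,g3) is an isotopism between S1 and S2, then there exists an integer i with 0 ≤ i < k (where q = p^k) such that g1(λx) = λ^{p^i}·g1(x) and g3(λx) = λ^{p^i}·g3(x) for all λ ∈ F_q and all x ∈ F_{p^n}; that is, g1 and g3 are F_q-semilinear maps with the same companion automorphism x ↦ x^{p^i} of F_q. -/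
namespace FiniteField

section Fintype

open Polynomial

variable {K : Type*} [Field K] [Fintype K]

theorem splits_X_pow_card_sub_X_self : (X ^ Fintype.card K - X : K[X]).Splits := by
  rw [splits_iff_card_roots, roots_X_pow_card_sub_X,
    X_pow_card_sub_X_natDegree_eq K Fintype.one_lt_card]
  rfl

theorem exists_hasEigenvalue_of_pow_card_eq_self {V : Type*} [AddCommGroup V] [Module K V]
    [FiniteDimensional K V] [Nontrivial V] {f : Module.End K V} (hf : f ^ Fintype.card K = f) :
    ∃ c, f.HasEigenvalue c := by
  have hdvd : minpoly K f ∣ X ^ Fintype.card K - X := minpoly.dvd K f (by simp [hf])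
  obtain ⟨c, hc⟩ := (splits_X_pow_card_sub_X_self.of_dvd
    (X_pow_card_sub_X_ne_zero K Fintype.one_lt_card) hdvd).exists_eval_eq_zero
    (minpoly.degree_pos (Algebra.IsIntegral.isIntegral f)).ne'
  exact ⟨c, Module.End.hasEigenvalue_of_isRoot hc⟩

theorem exists_common_eigenvector {V : Type*} [AddCommGroup V] [Module K V]
    [FiniteDimensional K V] [Nontrivial V] (φ : K →*₀ Module.End K V) :
    ∃ w ≠ 0, ∀ l, ∃ c : K, φ l w = c • w := by
  obtain ⟨g, hg⟩ := IsCyclic.exists_monoid_generator (α := Kˣ)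
  obtain ⟨c, hc⟩ := exists_hasEigenvalue_of_pow_card_eq_self (f := φ g)
    (by rw [← map_pow, pow_card])
  obtain ⟨w, hw⟩ := hc.exists_hasEigenvector
  refine ⟨w, hw.2, fun l => ?_⟩
  rcases eq_or_ne l 0 with rfl | hl
  · exact ⟨0, by simp⟩
  obtain ⟨m, hm⟩ := Submonoid.mem_powers_iff _ _ |>.1 (hg (Units.mk0 l hl))
  refine ⟨c ^ m, ?_⟩
  rw [← Units.val_mk0 hl, ← hm, Units.val_pow_eq_pow_val, map_pow, hw.pow_apply]

end Fintype

theorem exists_eq_pow_pow_of_ringHom {K : Type*} [Field K] [Finite K] {p k : ℕ}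
    [Fact p.Prime] [CharP K p] (hK : Nat.card K = p ^ k) (τ : K →+* K) :
    ∃ i < k, ∀ x, τ x = x ^ p ^ i := by
  let := ZMod.algebra K p
  have := Fintype.ofFinite K
  let τ' : K →ₐ[ZMod p] K :=
    { τ with commutes' := RingHom.congr_fun (Subsingleton.elim (τ.comp (algebraMap _ _)) _) }
  obtain ⟨⟨i, hi⟩, hτ⟩ := (bijective_frobeniusAlgHom_pow (ZMod p) K).2 τ'
  have hk : Module.finrank (ZMod p) K = k := by
    rw [Nat.card_eq_fintype_card, Module.card_eq_pow_finrank (K := ZMod p), ZMod.card] at hK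
    exact Nat.pow_right_injective (Fact.out : p.Prime).two_le hK
  refine ⟨i, hk ▸ hi, fun x => ?_⟩
  have := DFunLike.congr_fun hτ x
  simp only [AlgHom.coe_pow, coe_frobeniusAlgHom, pow_iterate, ZMod.card] at this
  exact this.symm

end FiniteField

theorem Subfield.exists_ringHom_of_forall_exists_mul {L : Type*} [Field L] (K : Subfield L)
    (g : L →+ L) (hg : Function.Injective g)
    (h : ∀ l : K, ∃ t : K, ∀ x, g (l * x) = t * g x) :
    ∃ τ : K →+* K, ∀ (l : K) x, g (l * x) = τ l * g x := by
  choose τ hτ using h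
  have hg1 : g 1 ≠ 0 := fun h0 => one_ne_zero (hg (h0.trans g.map_zero.symm))
  have huniq : ∀ l t : K, (∀ x, g (l * x) = t * g x) → τ l = t := fun l t ht =>
    Subtype.coe_injective <| mul_right_cancel₀ hg1 <| (hτ l 1).symm.trans (ht 1)
  refine ⟨{ toFun := τ, map_one' := ?_, map_mul' := ?_, map_zero' := ?_, map_add' := ?_ }, hτ⟩
  · exact huniq 1 1 fun x => by simp
  · intro a b
    refine huniq _ _ fun x => ?_
    rw [Subfield.coe_mul, mul_assoc, hτ, hτ, Subfield.coe_mul, mul_assoc]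
  · exact huniq 0 0 fun x => by simp
  · intro a b
    refine huniq _ _ fun x => ?_
    rw [Subfield.coe_add, add_mul, map_add, hτ, hτ, Subfield.coe_add, add_mul]

namespace Presemifield

variable {p : ℕ} {L : Type*} [Field L] [Module (ZMod p) L]

theorem mul_left_injective₀ (M : Presemifield p L) {b : L} (hb : b ≠ 0) :
    Function.Injective fun a => M.mul a b :=
  (injective_iff_map_eq_zero (M.mul.flip b)).2 fun a h =>
    (M.eq_zero_or_eq_zero a b h).resolve_right hb

theorem mul_right_injective₀ (M : Presemifield p L) {a : L} (ha : a ≠ 0) :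
    Function.Injective (M.mul a) :=
  (injective_iff_map_eq_zero (M.mul a)).2 fun b h =>
    (M.eq_zero_or_eq_zero a b h).resolve_left ha

def IsBilinearOver (M : Presemifield p L) (K : Subfield L) : Prop :=
  ∀ (l : K) (x y : L), M.mul (l * x) y = l * M.mul x y ∧ M.mul x (l * y) = l * M.mul x y

def IsIsotopism (M1 M2 : Presemifield p L) (g1 g2 g3 : L ≃ₗ[ZMod p] L) : Prop :=
  ∀ x y, M2.mul (g1 x) (g2 y) = g3 (M1.mul x y)

namespace IsIsotopism

variable {M1 M2 : Presemifield p L} {K : Subfield L} {g1 g2 g3 : L ≃ₗ[ZMod p] L}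

theorem mul_map_mul_comm (hiso : IsIsotopism M1 M2 g1 g2 g3) (h1 : M1.IsBilinearOver K)
    (l : K) (x y : L) : M2.mul (g1 (l * x)) (g2 y) = M2.mul (g1 x) (g2 (l * y)) := by
  rw [hiso, hiso, (h1 l x y).1, (h1 l x y).2]

theorem map_mul_symm_mul (hiso : IsIsotopism M1 M2 g1 g2 g3) (h1 : M1.IsBilinearOver K)
    (h2 : M2.IsBilinearOver K) (l μ : K) (t : L) :
    g2 (l * g2.symm (μ * t)) = μ * g2 (l * g2.symm t) := by
  refine M2.mul_right_injective₀ (a := g1 1) (by simp) ?_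
  calc M2.mul (g1 1) (g2 (l * g2.symm (μ * t)))
      = M2.mul (g1 (l * 1)) (μ * t) := by
        rw [← mul_map_mul_comm hiso h1, g2.apply_symm_apply]
    _ = μ * M2.mul (g1 (l * 1)) (g2 (g2.symm t)) := by rw [(h2 μ _ t).2, g2.apply_symm_apply]
    _ = M2.mul (g1 1) (μ * g2 (l * g2.symm t)) := by
        rw [mul_map_mul_comm hiso h1, (h2 μ _ _).2]

def conjMul (hiso : IsIsotopism M1 M2 g1 g2 g3) (h1 : M1.IsBilinearOver K)
    (h2 : M2.IsBilinearOver K) : K →*₀ Module.End K L where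
  toFun l :=
    { toFun := fun t => g2 (l * g2.symm t)
      map_add' := fun s t => by simp only [map_add, mul_add]
      map_smul' := map_mul_symm_mul hiso h1 h2 l }
  map_zero' := by ext; simp
  map_one' := by ext; simp
  map_mul' a b := by ext; simp [mul_assoc]

theorem exists_ringHom_left_map_mul [Finite L] (hiso : IsIsotopism M1 M2 g1 g2 g3)
    (h1 : M1.IsBilinearOver K) (h2 : M2.IsBilinearOver K) :
    ∃ τ : K →+* K, ∀ (l : K) x, g1 (l * x) = τ l * g1 x := by
  have : Fintype K := Fintype.ofFinite K
  obtain ⟨w, hw, hcommon⟩ := FiniteField.exists_common_eigenvector (conjMul hiso h1 h2)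
  refine K.exists_ringHom_of_forall_exists_mul g1.toAddMonoidHom g1.injective fun l => ?_
  obtain ⟨t, ht⟩ := hcommon l
  refine ⟨t, fun x => M2.mul_left_injective₀ hw ?_⟩
  calc M2.mul (g1 (l * x)) w
      = M2.mul (g1 x) (g2 (l * g2.symm w)) := by
        rw [← mul_map_mul_comm hiso h1, g2.apply_symm_apply]
    _ = t * M2.mul (g1 x) w := (congrArg (M2.mul (g1 x)) ht).trans (h2 t _ _).2
    _ = M2.mul (t * g1 x) w := ((h2 t _ _).1).symm

theorem out_map_mul_of_left_map_mul [Finite L] (hiso : IsIsotopism M1 M2 g1 g2 g3)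
    (h1 : M1.IsBilinearOver K) (h2 : M2.IsBilinearOver K) {τ : K → K}
    (hτ : ∀ (l : K) x, g1 (l * x) = τ l * g1 x) (l : K) (z : L) :
    g3 (l * z) = τ l * g3 z := by
  obtain ⟨x, rfl⟩ := Finite.injective_iff_surjective.1 (M1.mul_left_injective₀ one_ne_zero) z
  calc g3 (l * M1.mul x 1) = M2.mul (g1 (l * x)) (g2 1) := by rw [← (h1 l x 1).1, hiso]
    _ = τ l * g3 (M1.mul x 1) := by rw [hτ, (h2 _ _ _).1, hiso]

end IsIsotopism

end Presemifield

theorem statement14_general (p n k : ℕ) [Fact p.Prime]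
    (M1 M2 : Presemifield p (GaloisField p n))
    -- `K` is the subfield `F_q` of `F_{p^n}`, with `q = p^k`
    (K : Subfield (GaloisField p n)) (hK : Nat.card K = p ^ k)
    -- the multiplications of both presemifields are `F_q`-bilinear
    -- (equivalently, the spread sets lie in `End_{F_q}(F_{p^n})`)
    (hbil1 : ∀ (l : K) (x y : GaloisField p n),
      M1.mul ((l : GaloisField p n) * x) y = (l : GaloisField p n) * M1.mul x y ∧
      M1.mul x ((l : GaloisField p n) * y) = (l : GaloisField p n) * M1.mul x y)
    (hbil2 : ∀ (l : K) (x y : GaloisField p n),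
      M2.mul ((l : GaloisField p n) * x) y = (l : GaloisField p n) * M2.mul x y ∧
      M2.mul x ((l : GaloisField p n) * y) = (l : GaloisField p n) * M2.mul x y)
    -- `(g1,g2,g3)` is an isotopism between `M1` and `M2`
    (g1 g2 g3 : GaloisField p n ≃ₗ[ZMod p] GaloisField p n)
    (hiso : ∀ x y : GaloisField p n, M2.mul (g1 x) (g2 y) = g3 (M1.mul x y)) :
    ∃ i : ℕ, i < k ∧
      ∀ (l : K) (x : GaloisField p n),
        g1 ((l : GaloisField p n) * x) = (l : GaloisField p n) ^ p ^ i * g1 x ∧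
        g3 ((l : GaloisField p n) * x) = (l : GaloisField p n) ^ p ^ i * g3 x := by
  have := Subfield.charP K p
  obtain ⟨τ, hτ⟩ := Presemifield.IsIsotopism.exists_ringHom_left_map_mul hiso hbil1 hbil2
  obtain ⟨i, hik, hτi⟩ := FiniteField.exists_eq_pow_pow_of_ringHom hK τ
  refine ⟨i, hik, fun l x => ⟨?_, ?_⟩⟩
  · rw [hτ, hτi, SubmonoidClass.coe_pow]
  · rw [Presemifield.IsIsotopism.out_map_mul_of_left_map_mul hiso hbil1 hbil2 hτ, hτi,
      SubmonoidClass.coe_pow]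

theorem statement14 (p n k : ℕ) [Fact p.Prime] (hn : n ≠ 0)
    (M1 M2 : Presemifield p (GaloisField p n))
    -- `K` is the subfield `F_q` of `F_{p^n}`, with `q = p^k`
    (K : Subfield (GaloisField p n)) (hK : Nat.card K = p ^ k)
    -- the multiplications of both presemifields are `F_q`-bilinear
    -- (equivalently, the spread sets lie in `End_{F_q}(F_{p^n})`)
    (hbil1 : ∀ (l : K) (x y : GaloisField p n),
      M1.mul ((l : GaloisField p n) * x) y = (l : GaloisField p n) * M1.mul x y ∧
      M1.mul x ((l : GaloisField p n) * y) = (l : GaloisField p n) * M1.mul x y)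
    (hbil2 : ∀ (l : K) (x y : GaloisField p n),
      M2.mul ((l : GaloisField p n) * x) y = (l : GaloisField p n) * M2.mul x y ∧
      M2.mul x ((l : GaloisField p n) * y) = (l : GaloisField p n) * M2.mul x y)
    -- `(g1,g2,g3)` is an isotopism between `M1` and `M2`
    (g1 g2 g3 : GaloisField p n ≃ₗ[ZMod p] GaloisField p n)
    (hiso : ∀ x y : GaloisField p n, M2.mul (g1 x) (g2 y) = g3 (M1.mul x y)) :
    ∃ i : ℕ, i < k ∧
      ∀ (l : K) (x : GaloisField p n),
        g1 ((l : GaloisField p n) * x) = (l : GaloisField p n) ^ p ^ i * g1 x ∧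
        g3 ((l : GaloisField p n) * x) = (l : GaloisField p n) ^ p ^ i * g3 x :=
  statement14_general p n k M1 M2 K hK hbil1 hbil2 g1 g2 g3 hiso
end

section
/- Let q be an odd prime power (q = p^g, p odd prime) with q ≡ 1 (mod 4), let m be odd and n even with 0 < n < 4m and gcd(m,n) = 1, let u be a primitive element (a generator of the multiplicative group) of F_{q^{4m}} and set v = u^{q^m − 1}. Define on F_{q^{4m}} the multiplication x⋆y = y^{q^n}·x + y·x^{q^n} − v·(y^{q^{m+n}}·x^{q^{3m}} + y^{q^{3m}}·x^{q^{m+n}}). Then the middle-nucleus set {ψ ∈ End_{F_p}(F_{q^{4m}}) : for every y there exists z with ψ(x)⋆y = x⋆z for all x} equals the set of scalar maps {x ↦ λ·x : λ ∈ F_{q²}}, hence has exactly q² elements, and the right-nucleus set {μ ∈ End_{F_p}(F_{q^{4m}}) : for every y there exists z with μ(x⋆y) = x⋆z for all x} equals {x ↦ λ·x : λ ∈ F_q}, hence has exactly q elements. -/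
/-!
Every `𝔽_p`-linear map of `K = 𝔽_{p^N}` is a linearized polynomial `x ↦ ∑ c_i x^{p^i}` with
unique coefficients, and `x ⋆ y` is a "bilinearized" polynomial whose coefficient matrix has
only four nonzero entries, at the exponent pairs `(0, n)`, `(n, 0)`, `(3m, m+n)`, `(m+n, 3m)`
(in units of `q = p^g`). Comparing coefficients in `ψ(x) ⋆ y = x ⋆ z` kills every coefficient of
`ψ` except `c_0`, so `ψ = λ·`; the entries at `(0, n)` and `(3m, m+n)` then force
`λ^{q^{2n}} = λ^{q^{2m}} = λ`, i.e. `λ ∈ 𝔽_{q²}` as `gcd(m, n) = 1`.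

If `μ(x ⋆ y) = x ⋆ τ(y)`, then `τ(y)` is determined by the coefficient of `x^{q^n}`, so `τ` is
additive; by commutativity of `⋆` it lies in the middle nucleus, so `τ = λ·`. Comparing the
coefficients of `x^{p^b q^{3m}} y^{p^b q^{m+n}}` in `μ(x ⋆ y) = x ⋆ λy` gives `μ = λ·` with
`λ^{q^{m+n}} = λ`, i.e. `λ ∈ 𝔽_q`.

The counts come from the cyclicity of `Kˣ`: `{l | l^Q = l}` is `0` together with the kernel of
`u ↦ u^{Q-1}`, which has `Q - 1` elements when `Q - 1 ∣ |K| - 1`.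
-/

/-- The multiplication of a Bierbrauer presemifield on `F_{q^{4m}}`
(realized as `GaloisField p (g * (4m))`, `q = p^g`):
`x⋆y = y^{q^n}·x + y·x^{q^n} − v·(y^{q^{m+n}}·x^{q^{3m}} + y^{q^{3m}}·x^{q^{m+n}})`. -/
noncomputable def bierMul (p g m n q : ℕ) [Fact p.Prime]
    (v : GaloisField p (g * (4 * m))) (x y : GaloisField p (g * (4 * m))) :
    GaloisField p (g * (4 * m)) :=
  y ^ q ^ n * x + y * x ^ q ^ n -
    v * (y ^ q ^ (m + n) * x ^ q ^ (3 * m) + y ^ q ^ (3 * m) * x ^ q ^ (m + n))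

open Finset Polynomial

theorem Fintype.sum_mul_eq_of_ne_zero {ι R : Type*} [Fintype ι] [Semiring R] {f w : ι → R}
    {i₀ : ι} (h : ∀ i, f i ≠ 0 → i = i₀) : ∑ i, f i * w i = f i₀ * w i₀ :=
  Fintype.sum_eq_single i₀ fun i hi => by rw [not_not.mp (mt (h i) hi), zero_mul]

/-- The linearized polynomial `∑ c_i X^{p^i}`, indexed by `ZMod N` because on a field with
`p^N` elements the exponents `p^i` only matter modulo `N`. -/
noncomputable def linearized {K : Type*} [Semiring K] {N : ℕ} [NeZero N] (p : ℕ)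
    (c : ZMod N → K) (x : K) : K :=
  ∑ i, c i * x ^ p ^ i.val

noncomputable def bilinearized {K : Type*} [Semiring K] {N : ℕ} [NeZero N] (p : ℕ)
    (γ : ZMod N → ZMod N → K) (x y : K) : K :=
  linearized p (fun a => linearized p (γ a) y) x

section Linearized

variable {K : Type*} [Field K] {p N : ℕ}

theorem pow_pow_val_natCast [Finite K] (hK : Nat.card K = p ^ N) (x : K) (a : ℕ) :
    x ^ p ^ (a : ZMod N).val = x ^ p ^ a := by
  have := Fintype.ofFinite K
  have hcard : p ^ N = Fintype.card K := by rw [Fintype.card_eq_nat_card, hK]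
  conv_rhs => rw [← Nat.div_add_mod a N, pow_add, pow_mul, pow_mul, hcard,
    FiniteField.pow_card_pow]
  rw [ZMod.val_natCast]

variable [NeZero N]

theorem linearized_sum_mul {ι : Type*} (s : Finset ι) (f : ι → ZMod N → K) (w : ι → K)
    (x : K) :
    linearized p (fun a => ∑ i ∈ s, f i a * w i) x = ∑ i ∈ s, linearized p (f i) x * w i := by
  simp only [linearized, sum_mul]
  rw [sum_comm]
  exact sum_congr rfl fun i _ => sum_congr rfl fun a _ => by ring

theorem linearized_mul_const (c : ZMod N → K) (w x : K) :
    linearized p (fun a => c a * w) x = linearized p c x * w := by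
  simp only [linearized, sum_mul]
  exact sum_congr rfl fun i _ => by ring

theorem linearized_eq_mul_of_forall_ne_zero {c : ZMod N → K} (hc : ∀ i ≠ 0, c i = 0) (x : K) :
    linearized p c x = c 0 * x := by
  rw [linearized, sum_eq_single 0 (fun i _ hi => by rw [hc i hi, zero_mul]) (by simp)]
  simp

theorem bilinearized_comm (γ : ZMod N → ZMod N → K) (x y : K) :
    bilinearized p γ x y = bilinearized p (fun a j => γ j a) y x := by
  simp only [bilinearized, linearized, sum_mul]
  rw [sum_comm]
  exact sum_congr rfl fun i _ => sum_congr rfl fun a _ => by ring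

theorem bilinearized_mul_left (γ : ZMod N → ZMod N → K) (l x y : K) :
    bilinearized p γ (l * x) y = bilinearized p (fun a j => γ a j * l ^ p ^ a.val) x y := by
  simp only [bilinearized, linearized, mul_pow, sum_mul]
  exact sum_congr rfl fun i _ => sum_congr rfl fun a _ => by ring

theorem bilinearized_mul_right (γ : ZMod N → ZMod N → K) (l x y : K) :
    bilinearized p γ x (l * y) = bilinearized p (fun a j => γ a j * l ^ p ^ j.val) x y := by
  simp only [bilinearized, linearized, mul_pow]
  exact sum_congr rfl fun i _ => congrArg (· * _) (sum_congr rfl fun a _ => by ring)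

section LinearMap

variable [Fact p.Prime] [CharP K p] [Algebra (ZMod p) K]

noncomputable def linearizedMap (c : ZMod N → K) : K →ₗ[ZMod p] K where
  toFun := linearized p c
  map_add' x y := by simp only [linearized, add_pow_char_pow, mul_add, sum_add_distrib]
  map_smul' r x := by
    simp only [linearized, Algebra.smul_def, mul_pow, ← map_pow, ZMod.pow_card_pow,
      RingHom.id_apply, mul_sum, mul_left_comm]

theorem bilinearized_eq_linearizedMap (γ : ZMod N → ZMod N → K) (x y : K) :
    bilinearized p γ x y = linearizedMap (fun j => linearized p (fun a => γ a j) x) y := by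
  rw [bilinearized_comm]
  rfl

theorem bilinearized_add_right (γ : ZMod N → ZMod N → K) (x y y' : K) :
    bilinearized p γ x (y + y') = bilinearized p γ x y + bilinearized p γ x y' := by
  simp only [bilinearized_eq_linearizedMap, map_add]

theorem bilinearized_smul_right (γ : ZMod N → ZMod N → K) (x : K) (r : ZMod p) (y : K) :
    bilinearized p γ x (r • y) = r • bilinearized p γ x y := by
  simp only [bilinearized_eq_linearizedMap, map_smul]

end LinearMap

variable [Finite K]

theorem pow_pow_val_add (hK : Nat.card K = p ^ N) (x : K) (i j : ZMod N) :
    x ^ p ^ (i + j).val = (x ^ p ^ j.val) ^ p ^ i.val := by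
  rw [← pow_mul, ← pow_add, ← pow_pow_val_natCast hK x (j.val + i.val)]
  simp [add_comm]

variable [Fact p.Prime]

theorem linearized_injective (hK : Nat.card K = p ^ N) :
    Function.Injective (linearized (K := K) (N := N) p) := by
  classical
  intro c d h
  have := Fintype.ofFinite K
  have hp : 1 < p := (Fact.out : p.Prime).one_lt
  have hpow : ∀ i j : ZMod N, p ^ i.val = p ^ j.val ↔ i = j := fun i j =>
    (Nat.pow_right_injective hp).eq_iff.trans (ZMod.val_injective N).eq_iff
  let P : K[X] := ∑ i, C (c i - d i) * X ^ p ^ i.val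
  have hP : P = 0 := by
    refine eq_zero_of_natDegree_lt_card_of_eval_eq_zero' P univ (fun x _ => ?_) ?_
    · have hx := congrFun h x
      simp only [linearized] at hx
      simp [P, eval_finsetSum, sub_mul, sum_sub_distrib, hx]
    · have hdeg : P.natDegree ≤ p ^ (N - 1) := by
        refine natDegree_sum_le_of_forall_le _ _ fun i _ => (natDegree_C_mul_le _ _).trans ?_
        rw [natDegree_X_pow]
        exact Nat.pow_le_pow_right hp.le (by have := ZMod.val_lt i; omega)
      rw [card_univ, Fintype.card_eq_nat_card, hK]
      exact hdeg.trans_lt (Nat.pow_lt_pow_right hp (by have := NeZero.pos N; omega))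
  funext i
  have hi := congrArg (coeff · (p ^ i.val)) hP
  simp only [P, finsetSum_coeff, coeff_C_mul, coeff_X_pow, hpow, mul_ite, mul_one, mul_zero,
    sum_ite_eq, mem_univ, if_true, coeff_zero, sub_eq_zero] at hi
  exact hi

theorem linearized_eq_of_bilinearized_eq (hK : Nat.card K = p ^ N)
    {γ γ' : ZMod N → ZMod N → K} {y z : K}
    (h : ∀ x, bilinearized p γ x y = bilinearized p γ' x z) (a : ZMod N) :
    linearized p (γ a) y = linearized p (γ' a) z :=
  congrFun (linearized_injective hK (funext h)) a

theorem bilinearized_injective (hK : Nat.card K = p ^ N) :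
    Function.Injective (bilinearized (K := K) (N := N) p) := by
  intro γ γ' h
  funext a
  refine linearized_injective hK (funext fun y => ?_)
  exact linearized_eq_of_bilinearized_eq hK (fun x => congrFun (congrFun h x) y) a

variable [CharP K p]

theorem linearized_pow (hK : Nat.card K = p ^ N) (c : ZMod N → K) (x : K) (i : ZMod N) :
    linearized p c x ^ p ^ i.val = linearized p (fun a => c (a - i) ^ p ^ i.val) x := by
  rw [linearized, sum_pow_char_pow]
  refine Fintype.sum_equiv (Equiv.addRight i) _ _ fun j => ?_
  simp only [Equiv.coe_addRight, add_sub_cancel_right]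
  rw [mul_pow, add_comm j i, pow_pow_val_add hK]

theorem linearized_comp (hK : Nat.card K = p ^ N) (c d : ZMod N → K) (x : K) :
    linearized p d (linearized p c x) =
      linearized p (fun a => ∑ i, d i * c (a - i) ^ p ^ i.val) x := by
  simp only [mul_comm (d _), linearized_sum_mul]
  simp only [← linearized_pow hK, mul_comm _ (d _)]
  rfl

theorem bilinearized_linearized_left (hK : Nat.card K = p ^ N) (γ : ZMod N → ZMod N → K)
    (c : ZMod N → K) (x y : K) :
    bilinearized p γ (linearized p c x) y =
      bilinearized p (fun a j => ∑ i, γ i j * c (a - i) ^ p ^ i.val) x y := by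
  simp only [bilinearized, linearized_comp hK, linearized_sum_mul]

theorem linearized_bilinearized (hK : Nat.card K = p ^ N) (γ : ZMod N → ZMod N → K)
    (c : ZMod N → K) (x y : K) :
    linearized p c (bilinearized p γ x y) =
      bilinearized p (fun a j => ∑ i, c i * γ (a - i) (j - i) ^ p ^ i.val) x y := by
  rw [bilinearized, linearized_comp hK]
  congr 1
  funext a
  simp only [linearized_pow hK, mul_comm (c _), linearized_sum_mul]

theorem row_eq_zero_of_bilinearized_linearized_left (hK : Nat.card K = p ^ N)
    {γ : ZMod N → ZMod N → K} {c : ZMod N → K}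
    (hc : ∀ y, ∃ z, ∀ x, bilinearized p γ (linearized p c x) y = bilinearized p γ x z)
    {a : ZMod N} (ha : γ a = 0) (j : ZMod N) :
    ∑ i, γ i j * c (a - i) ^ p ^ i.val = 0 := by
  suffices hrow : (fun j => ∑ i, γ i j * c (a - i) ^ p ^ i.val) = 0 from congrFun hrow j
  refine linearized_injective hK (funext fun y => ?_)
  obtain ⟨z, hz⟩ := hc y
  rw [linearized_eq_of_bilinearized_eq hK
    (fun x => (bilinearized_linearized_left hK γ c x y).symm.trans (hz x)) a, ha]
  simp [linearized]

variable [Algebra (ZMod p) K]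

theorem exists_linearized_eq (hK : Nat.card K = p ^ N) (f : K →ₗ[ZMod p] K) :
    ∃ c : ZMod N → K, ⇑f = linearized p c := by
  have hfin : Module.finrank (ZMod p) K = N := by
    have := Module.natCard_eq_pow_finrank (K := ZMod p) (V := K)
    rw [hK, Nat.card_zmod] at this
    exact (Nat.pow_right_injective (Fact.out : p.Prime).two_le this).symm
  have hcard : Nat.card (K →ₗ[ZMod p] K) ≤ Nat.card (ZMod N → K) := by
    rw [Module.natCard_eq_pow_finrank (K := ZMod p), Module.finrank_linearMap, hfin,
      Nat.card_fun, hK, Nat.card_zmod, Nat.card_zmod, pow_mul]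
  have : Finite (K →ₗ[ZMod p] K) := Finite.of_injective _ DFunLike.coe_injective
  have hmap : Function.Injective (linearizedMap (K := K) (p := p) (N := N)) :=
    fun c d h => linearized_injective hK (congrArg DFunLike.coe h)
  obtain ⟨c, rfl⟩ := (hmap.bijective_of_nat_card_le hcard).2 f
  exact ⟨c, rfl⟩

end Linearized

section Star

variable {K : Type*} [Field K] {N : ℕ}

def starCoeff (v : K) (e₁ e₂ e₃ a j : ZMod N) : K :=
  (if a = 0 ∧ j = e₁ then 1 else 0) + (if a = e₁ ∧ j = 0 then 1 else 0)
    - (if a = e₂ ∧ j = e₃ then v else 0) - (if a = e₃ ∧ j = e₂ then v else 0)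

theorem starCoeff_swap (v : K) (e₁ e₂ e₃ : ZMod N) :
    (fun a j => starCoeff v e₁ e₂ e₃ j a) = starCoeff v e₁ e₂ e₃ := by
  funext a j
  simp only [starCoeff, and_comm]
  ring

theorem starCoeff_support {v : K} {e₁ e₂ e₃ a j : ZMod N} (h : starCoeff v e₁ e₂ e₃ a j ≠ 0) :
    (a = 0 ∧ j = e₁) ∨ (a = e₁ ∧ j = 0) ∨ (a = e₂ ∧ j = e₃) ∨ (a = e₃ ∧ j = e₂) := by
  by_contra hc
  simp only [not_or] at hc
  exact h (by simp only [starCoeff, if_neg hc.1, if_neg hc.2.1, if_neg hc.2.2.1, if_neg hc.2.2.2,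
    sub_zero, add_zero])

theorem bilinearized_starCoeff [NeZero N] (p : ℕ) (v : K) (e₁ e₂ e₃ : ZMod N) (x y : K) :
    bilinearized p (starCoeff v e₁ e₂ e₃) x y =
      y ^ p ^ e₁.val * x + y * x ^ p ^ e₁.val
        - v * (y ^ p ^ e₃.val * x ^ p ^ e₂.val + y ^ p ^ e₂.val * x ^ p ^ e₃.val) := by
  simp only [bilinearized, linearized, starCoeff, ite_and, sub_mul, add_mul, ite_mul, one_mul,
    zero_mul, sum_sub_distrib, sum_add_distrib, sum_ite_irrel, sum_ite_eq', mem_univ, if_true,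
    sum_const_zero, ZMod.val_zero, pow_zero, pow_one]
  ring

structure AdmissibleExponents (e₁ e₂ e₃ : ZMod N) : Prop where
  e₁_ne_zero : e₁ ≠ 0
  e₂_ne_zero : e₂ ≠ 0
  e₃_ne_zero : e₃ ≠ 0
  e₁_ne_e₂ : e₁ ≠ e₂
  e₁_ne_e₃ : e₁ ≠ e₃
  add_e₂_ne_zero : e₁ + e₂ ≠ 0
  add_e₃_ne_zero : e₁ + e₃ ≠ 0
  add_e₂_ne_e₃ : e₁ + e₂ ≠ e₃
  add_e₃_ne_e₂ : e₁ + e₃ ≠ e₂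
  eq_of_add_self_eq : e₂ + e₂ = e₃ + e₃ → e₂ = e₃

namespace AdmissibleExponents

variable {e₁ e₂ e₃ : ZMod N}

theorem starCoeff_zero_e₁ (he : AdmissibleExponents e₁ e₂ e₃) (v : K) :
    starCoeff v e₁ e₂ e₃ 0 e₁ = 1 := by
  simp [starCoeff, he.e₁_ne_zero, he.e₂_ne_zero.symm, he.e₃_ne_zero.symm]

theorem starCoeff_e₁_zero (he : AdmissibleExponents e₁ e₂ e₃) (v : K) :
    starCoeff v e₁ e₂ e₃ e₁ 0 = 1 := by
  simp [starCoeff, he.e₁_ne_zero, he.e₁_ne_e₂, he.e₁_ne_e₃]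

/-- `e₂ = e₃` is allowed (it happens for `m = 1`, `n = 2`); the entry is then `-2v`. -/
theorem starCoeff_e₂_e₃_ne_zero (he : AdmissibleExponents e₁ e₂ e₃) {v : K} (hv : v ≠ 0)
    (h2 : (2 : K) ≠ 0) : starCoeff v e₁ e₂ e₃ e₂ e₃ ≠ 0 := by
  by_cases h : e₂ = e₃
  · simp only [starCoeff, h, he.e₃_ne_zero, he.e₁_ne_e₃.symm, and_self, if_false, if_true,
      zero_add]
    exact fun h' => mul_ne_zero h2 hv (by linear_combination -h')
  · simp [starCoeff, h, Ne.symm h, he.e₂_ne_zero, he.e₁_ne_e₂.symm, hv]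

theorem eq_zero_of_starCoeff_apply_e₁_ne_zero (he : AdmissibleExponents e₁ e₂ e₃) {v : K}
    {i : ZMod N}
    (h : starCoeff v e₁ e₂ e₃ i e₁ ≠ 0) : i = 0 := by
  rcases starCoeff_support h with h | h | h | h
  exacts [h.1, absurd h.2 he.e₁_ne_zero, absurd h.2 he.e₁_ne_e₃, absurd h.2 he.e₁_ne_e₂]

theorem eq_e₁_of_starCoeff_apply_zero_ne_zero (he : AdmissibleExponents e₁ e₂ e₃) {v : K}
    {i : ZMod N}
    (h : starCoeff v e₁ e₂ e₃ i 0 ≠ 0) : i = e₁ := by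
  rcases starCoeff_support h with h | h | h | h
  exacts [absurd h.2.symm he.e₁_ne_zero, h.1, absurd h.2.symm he.e₃_ne_zero,
    absurd h.2.symm he.e₂_ne_zero]

theorem eq_e₂_of_starCoeff_apply_e₃_ne_zero (he : AdmissibleExponents e₁ e₂ e₃) {v : K} {i : ZMod N}
    (h : starCoeff v e₁ e₂ e₃ i e₃ ≠ 0) : i = e₂ := by
  rcases starCoeff_support h with h | h | h | h
  exacts [absurd h.2.symm he.e₁_ne_e₃, absurd h.2 he.e₃_ne_zero, h.1, h.1.trans h.2]

theorem eq_e₂_of_sub_eq (he : AdmissibleExponents e₁ e₂ e₃) {v : K} {a j : ZMod N}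
    (hsub : a - j = e₂ - e₃) (h : starCoeff v e₁ e₂ e₃ a j ≠ 0) : a = e₂ := by
  rcases starCoeff_support h with ⟨rfl, rfl⟩ | ⟨rfl, rfl⟩ | ⟨rfl, rfl⟩ | ⟨rfl, rfl⟩
  · exact absurd (by linear_combination -hsub) he.add_e₂_ne_e₃
  · exact absurd (by linear_combination hsub) he.add_e₃_ne_e₂
  · rfl
  · exact he.eq_of_add_self_eq (by linear_combination -hsub) ▸ rfl

theorem eq_zero_of_starCoeff_e₁_apply_ne_zero (he : AdmissibleExponents e₁ e₂ e₃) {v : K}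
    {j : ZMod N} (h : starCoeff v e₁ e₂ e₃ e₁ j ≠ 0) : j = 0 := by
  rcases starCoeff_support h with h | h | h | h
  exacts [absurd h.1 he.e₁_ne_zero, h.2, absurd h.1 he.e₁_ne_e₂, absurd h.1 he.e₁_ne_e₃]

theorem starCoeff_e₁_apply_eq_zero (he : AdmissibleExponents e₁ e₂ e₃) {v : K} {j : ZMod N}
    (hj : j ≠ 0) : starCoeff v e₁ e₂ e₃ e₁ j = 0 :=
  not_not.mp (mt he.eq_zero_of_starCoeff_e₁_apply_ne_zero hj)

theorem linearized_starCoeff_e₁ [NeZero N] (he : AdmissibleExponents e₁ e₂ e₃) (p : ℕ) (v y : K) :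
    linearized p (starCoeff v e₁ e₂ e₃ e₁) y = y := by
  rw [linearized_eq_mul_of_forall_ne_zero fun _ => he.starCoeff_e₁_apply_eq_zero,
    he.starCoeff_e₁_zero, one_mul]

theorem coeff_eq_zero_of_row_eq_zero (he : AdmissibleExponents e₁ e₂ e₃) {p : ℕ} [Fact p.Prime]
    [NeZero N] {v : K} (hv : v ≠ 0) (h2 : (2 : K) ≠ 0) {c : ZMod N → K} {a : ZMod N}
    (hrow : ∀ j, ∑ i, starCoeff v e₁ e₂ e₃ i j * c (a - i) ^ p ^ i.val = 0) :
    c a = 0 ∧ c (a - e₁) = 0 ∧ c (a - e₂) = 0 := by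
  refine ⟨?_, ?_, ?_⟩
  · have := hrow e₁
    rwa [Fintype.sum_mul_eq_of_ne_zero fun i => he.eq_zero_of_starCoeff_apply_e₁_ne_zero (i := i),
      he.starCoeff_zero_e₁, sub_zero, ZMod.val_zero, pow_zero, pow_one, one_mul] at this
  · have := hrow 0
    rw [Fintype.sum_mul_eq_of_ne_zero fun i => he.eq_e₁_of_starCoeff_apply_zero_ne_zero (i := i),
      he.starCoeff_e₁_zero, one_mul] at this
    exact eq_zero_of_pow_eq_zero this
  · have := hrow e₃
    rw [Fintype.sum_mul_eq_of_ne_zero fun i => he.eq_e₂_of_starCoeff_apply_e₃_ne_zero (i := i)]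
      at this
    exact eq_zero_of_pow_eq_zero
      ((mul_eq_zero.mp this).resolve_left (he.starCoeff_e₂_e₃_ne_zero hv h2))

end AdmissibleExponents

end Star

namespace AdmissibleExponents

variable {K : Type*} [Field K] [Finite K] {p N : ℕ} [NeZero N] [Fact p.Prime]
  {e₁ e₂ e₃ : ZMod N} {v : K}

theorem eq_of_bilinearized_eq (hK : Nat.card K = p ^ N) (he : AdmissibleExponents e₁ e₂ e₃)
    {z z' : K} (h : ∀ x, bilinearized p (starCoeff v e₁ e₂ e₃) x z =
      bilinearized p (starCoeff v e₁ e₂ e₃) x z') : z = z' := by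
  simpa [he.linearized_starCoeff_e₁] using linearized_eq_of_bilinearized_eq hK h e₁

theorem pow_eq_of_middle_mul (hK : Nat.card K = p ^ N) (he : AdmissibleExponents e₁ e₂ e₃)
    (hv : v ≠ 0) (h2 : (2 : K) ≠ 0) {l : K}
    (hl : ∀ y, ∃ z, ∀ x, bilinearized p (starCoeff v e₁ e₂ e₃) (l * x) y =
      bilinearized p (starCoeff v e₁ e₂ e₃) x z) :
    (l ^ p ^ e₁.val) ^ p ^ e₁.val = l ∧ l ^ p ^ e₂.val = (l ^ p ^ e₁.val) ^ p ^ e₃.val := by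
  have hl' : ∀ x y, bilinearized p (starCoeff v e₁ e₂ e₃) (l * x) y =
      bilinearized p (starCoeff v e₁ e₂ e₃) x (l ^ p ^ e₁.val * y) := by
    intro x y
    obtain ⟨z, hz⟩ := hl y
    have hrow := linearized_eq_of_bilinearized_eq hK
      (fun x => (bilinearized_mul_left _ l x y).symm.trans (hz x)) e₁
    rw [linearized_mul_const, he.linearized_starCoeff_e₁, he.linearized_starCoeff_e₁] at hrow
    rw [hz, ← hrow, mul_comm]
  have hcoeff : ∀ a j, starCoeff v e₁ e₂ e₃ a j * l ^ p ^ a.val =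
      starCoeff v e₁ e₂ e₃ a j * (l ^ p ^ e₁.val) ^ p ^ j.val := by
    have := bilinearized_injective hK (funext₂ fun x y =>
      (bilinearized_mul_left _ l x y).symm.trans ((hl' x y).trans (bilinearized_mul_right _ _ x y)))
    exact fun a j => congrFun (congrFun this a) j
  constructor
  · simpa [he.starCoeff_zero_e₁] using (hcoeff 0 e₁).symm
  · exact mul_left_cancel₀ (he.starCoeff_e₂_e₃_ne_zero hv h2) (hcoeff e₂ e₃)

variable [CharP K p]

/-- Rows `a ∉ {0, e₁, e₂, e₃}` kill `c a`, `c (a - e₁)`, `c (a - e₂)`; the rows `e₁ + e₂` and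
`e₁ + e₃` then reach the three remaining nonzero indices. -/
theorem coeff_eq_zero_of_middle (hK : Nat.card K = p ^ N) (he : AdmissibleExponents e₁ e₂ e₃)
    (hv : v ≠ 0) (h2 : (2 : K) ≠ 0) {c : ZMod N → K}
    (hc : ∀ y, ∃ z, ∀ x, bilinearized p (starCoeff v e₁ e₂ e₃) (linearized p c x) y =
      bilinearized p (starCoeff v e₁ e₂ e₃) x z) :
    ∀ b ≠ 0, c b = 0 := by
  have hkill : ∀ a, a ≠ 0 → a ≠ e₁ → a ≠ e₂ → a ≠ e₃ →
      c a = 0 ∧ c (a - e₁) = 0 ∧ c (a - e₂) = 0 := fun a h0 h1 h2' h3 =>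
    he.coeff_eq_zero_of_row_eq_zero hv h2 (row_eq_zero_of_bilinearized_linearized_left hK hc
      (funext fun j => by simp [starCoeff, h0, h1, h2', h3]))
  have hkill₂ := hkill _ he.add_e₂_ne_zero (fun h => he.e₂_ne_zero (add_eq_left.mp h))
    (fun h => he.e₁_ne_zero (add_eq_right.mp h)) he.add_e₂_ne_e₃
  have hkill₃ := hkill _ he.add_e₃_ne_zero (fun h => he.e₃_ne_zero (add_eq_left.mp h))
    he.add_e₃_ne_e₂ (fun h => he.e₁_ne_zero (add_eq_right.mp h))
  rw [add_sub_cancel_left, add_sub_cancel_right] at hkill₂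
  rw [add_sub_cancel_left] at hkill₃
  intro b hb
  by_cases hb₁ : b = e₁
  · exact hb₁ ▸ hkill₂.2.2
  by_cases hb₂ : b = e₂
  · exact hb₂ ▸ hkill₂.2.1
  by_cases hb₃ : b = e₃
  · exact hb₃ ▸ hkill₃.2.1
  exact (hkill b hb hb₁ hb₂ hb₃).1

theorem coeff_eq_of_right (hK : Nat.card K = p ^ N) (he : AdmissibleExponents e₁ e₂ e₃)
    (hv : v ≠ 0) (h2 : (2 : K) ≠ 0) {c : ZMod N → K} {l : K}
    (h : ∀ x y, linearized p c (bilinearized p (starCoeff v e₁ e₂ e₃) x y) =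
      bilinearized p (starCoeff v e₁ e₂ e₃) x (l * y)) :
    (∀ b ≠ 0, c b = 0) ∧ c 0 = l ^ p ^ e₃.val ∧ c 0 = l := by
  have hcoeff : ∀ a j, ∑ i, c i * starCoeff v e₁ e₂ e₃ (a - i) (j - i) ^ p ^ i.val =
      starCoeff v e₁ e₂ e₃ a j * l ^ p ^ j.val := by
    have := bilinearized_injective hK (funext₂ fun x y =>
      (linearized_bilinearized hK _ c x y).symm.trans
      ((h x y).trans (bilinearized_mul_right _ _ x y)))
    exact fun a j => congrFun (congrFun this a) j
  have hoff : ∀ b i, i ≠ b → starCoeff v e₁ e₂ e₃ (b + e₂ - i) (b + e₃ - i) = 0 := fun b i hi =>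
    not_not.mp fun hne => hi (by linear_combination -(he.eq_e₂_of_sub_eq (by ring) hne))
  have hdiag : ∀ b, c b * starCoeff v e₁ e₂ e₃ e₂ e₃ ^ p ^ b.val =
      starCoeff v e₁ e₂ e₃ (b + e₂) (b + e₃) * l ^ p ^ (b + e₃).val := by
    intro b
    rw [← hcoeff, Fintype.sum_eq_single b fun i hi => by
      rw [hoff b i hi, zero_pow (pow_ne_zero _ (Fact.out : p.Prime).ne_zero), mul_zero]]
    simp only [add_sub_cancel_left]
  have hne := he.starCoeff_e₂_e₃_ne_zero hv h2
  have hvanish : ∀ b ≠ 0, c b = 0 := fun b hb => by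
    have := hdiag b
    rw [show starCoeff v e₁ e₂ e₃ (b + e₂) (b + e₃) = 0 by simpa using hoff b 0 (Ne.symm hb),
      zero_mul] at this
    exact (mul_eq_zero.mp this).resolve_right (pow_ne_zero _ hne)
  refine ⟨hvanish, ?_, ?_⟩
  · have := hdiag 0
    simp only [zero_add, ZMod.val_zero, pow_zero, pow_one] at this
    exact mul_left_cancel₀ hne (by rw [mul_comm]; exact this)
  · have := hcoeff e₁ 0
    rw [Fintype.sum_eq_single 0 fun i hi => by rw [hvanish i hi, zero_mul]] at this
    simpa [he.starCoeff_e₁_zero] using this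

variable [Algebra (ZMod p) K]

theorem exists_eq_mul_of_middle (hK : Nat.card K = p ^ N) (he : AdmissibleExponents e₁ e₂ e₃)
    (hv : v ≠ 0) (h2 : (2 : K) ≠ 0) (ψ : K →ₗ[ZMod p] K)
    (hψ : ∀ y, ∃ z, ∀ x, bilinearized p (starCoeff v e₁ e₂ e₃) (ψ x) y =
      bilinearized p (starCoeff v e₁ e₂ e₃) x z) :
    ∃ l, (∀ x, ψ x = l * x) ∧
      (l ^ p ^ e₁.val) ^ p ^ e₁.val = l ∧ l ^ p ^ e₂.val = (l ^ p ^ e₁.val) ^ p ^ e₃.val := by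
  obtain ⟨c, hc⟩ := exists_linearized_eq hK ψ
  have hψl : ∀ x, ψ x = c 0 * x := fun x => by
    rw [hc, linearized_eq_mul_of_forall_ne_zero
      (he.coeff_eq_zero_of_middle hK hv h2 (by simpa only [hc] using hψ))]
  exact ⟨c 0, hψl, he.pow_eq_of_middle_mul hK hv h2 (by simpa only [hψl] using hψ)⟩

theorem exists_linearMap_of_right (hK : Nat.card K = p ^ N)
    (he : AdmissibleExponents e₁ e₂ e₃) (μ : K →ₗ[ZMod p] K)
    (hμ : ∀ y, ∃ z, ∀ x, μ (bilinearized p (starCoeff v e₁ e₂ e₃) x y) =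
      bilinearized p (starCoeff v e₁ e₂ e₃) x z) :
    ∃ τ : K →ₗ[ZMod p] K, ∀ x y, μ (bilinearized p (starCoeff v e₁ e₂ e₃) x y) =
      bilinearized p (starCoeff v e₁ e₂ e₃) x (τ y) := by
  choose τ hτ using hμ
  refine ⟨{ toFun := τ, map_add' := fun y y' => ?_, map_smul' := fun r y => ?_ },
    fun x y => hτ y x⟩
  · refine he.eq_of_bilinearized_eq (v := v) hK fun x => ?_
    calc _ = μ (bilinearized p (starCoeff v e₁ e₂ e₃) x (y + y')) := (hτ _ x).symm
      _ = _ := by rw [bilinearized_add_right, map_add, hτ, hτ, bilinearized_add_right]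
  · refine he.eq_of_bilinearized_eq (v := v) hK fun x => ?_
    calc _ = μ (bilinearized p (starCoeff v e₁ e₂ e₃) x (r • y)) := (hτ _ x).symm
      _ = _ := by rw [bilinearized_smul_right, map_smul, hτ, RingHom.id_apply,
        bilinearized_smul_right]

theorem exists_eq_mul_of_right (hK : Nat.card K = p ^ N) (he : AdmissibleExponents e₁ e₂ e₃)
    (hv : v ≠ 0) (h2 : (2 : K) ≠ 0) (μ : K →ₗ[ZMod p] K)
    (hμ : ∀ y, ∃ z, ∀ x, μ (bilinearized p (starCoeff v e₁ e₂ e₃) x y) =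
      bilinearized p (starCoeff v e₁ e₂ e₃) x z) :
    ∃ l, (∀ x, μ x = l * x) ∧
      ((l ^ p ^ e₁.val) ^ p ^ e₁.val = l ∧ l ^ p ^ e₂.val = (l ^ p ^ e₁.val) ^ p ^ e₃.val) ∧
      l ^ p ^ e₃.val = l := by
  obtain ⟨τ, hτ⟩ := he.exists_linearMap_of_right hK μ hμ
  have hcomm : ∀ x y, bilinearized p (starCoeff v e₁ e₂ e₃) x y =
      bilinearized p (starCoeff v e₁ e₂ e₃) y x := fun x y => by
    rw [bilinearized_comm, starCoeff_swap]
  obtain ⟨l, hl, hmid⟩ := he.exists_eq_mul_of_middle hK hv h2 τ fun y =>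
    ⟨τ y, fun x => by rw [hcomm, ← hτ, hcomm, hτ]⟩
  obtain ⟨c, hc⟩ := exists_linearized_eq hK μ
  obtain ⟨hvanish, hc₃, hc₁⟩ := he.coeff_eq_of_right hK hv h2 (c := c) (l := l)
    fun x y => by rw [← hc, hτ, hl]
  refine ⟨l, fun x => ?_, hmid, hc₃.symm.trans hc₁⟩
  rw [hc, linearized_eq_mul_of_forall_ne_zero hvanish, hc₁]

end AdmissibleExponents

section Counting

theorem card_setOf_pow_eq_self {K : Type*} [Field K] [Finite K] {Q : ℕ} (hQ : 0 < Q)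
    (hdvd : Q - 1 ∣ Nat.card K - 1) : Nat.card {l : K | l ^ Q = l} = Q := by
  set H := (powMonoidHom (Q - 1) : Kˣ →* Kˣ).ker
  have hset : {l : K | l ^ Q = l} = insert 0 ((↑) '' (H : Set Kˣ)) := by
    ext l
    simp only [Set.mem_ofPred_eq, Set.mem_insert_iff, Set.mem_image, SetLike.mem_coe,
      MonoidHom.mem_ker, powMonoidHom_apply, H]
    constructor
    · intro hl
      by_cases h0 : l = 0
      · exact Or.inl h0
      · refine Or.inr ⟨Units.mk0 l h0, Units.ext ?_, rfl⟩
        refine mul_right_cancel₀ h0 ?_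
        rw [Units.val_pow_eq_pow_val, Units.val_mk0, ← pow_succ, Nat.sub_add_cancel hQ, hl,
          Units.val_one, one_mul]
    · rintro (rfl | ⟨u, hu, rfl⟩)
      · exact zero_pow hQ.ne'
      · rw [← Nat.sub_add_cancel hQ, pow_succ, ← Units.val_pow_eq_pow_val, hu, Units.val_one,
          one_mul]
  have h0 : (0 : K) ∉ ((↑) '' (H : Set Kˣ)) := fun ⟨u, _, hu⟩ => u.ne_zero hu
  rw [Nat.card_coe_set_eq, hset, Set.ncard_insert_of_notMem h0,
    Set.ncard_image_of_injective _ Units.val_injective, ← Nat.card_coe_set_eq,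
    SetLike.coe_sort_coe, IsCyclic.card_powMonoidHom_ker, Nat.card_units, Nat.gcd_eq_right hdvd]
  omega

theorem card_setOf_linearMap_eq_mul {R K : Type*} [CommSemiring R] [CommSemiring K]
    [Algebra R K] (P : K → Prop) :
    Nat.card {f : K →ₗ[R] K | ∃ l, P l ∧ ∀ x, f x = l * x} = Nat.card {l : K | P l} := by
  refine Nat.card_congr
    { toFun := fun f => ⟨f.1 1, ?_⟩
      invFun := fun l => ⟨LinearMap.mulLeft R l.1, l.1, l.2, fun x => rfl⟩
      left_inv := fun f => ?_
      right_inv := fun l => by simp }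
  · obtain ⟨l, hl, h⟩ := f.2
    simpa [h 1] using hl
  · obtain ⟨l, hl, h⟩ := f.2
    ext x
    simp [h 1, h x]

end Counting

section Periodic

variable {M : Type*} [Monoid M] {l : M} {q : ℕ}

theorem isPeriodicPt_pow_iff {k : ℕ} : Function.IsPeriodicPt (· ^ q) k l ↔ l ^ q ^ k = l := by
  simp [Function.IsPeriodicPt, Function.IsFixedPt, pow_iterate]

theorem pow_pow_eq_pow_pow_mod_two (hl : l ^ q ^ 2 = l) (k : ℕ) :
    l ^ q ^ k = l ^ q ^ (k % 2) := by
  simpa [pow_iterate] using ((isPeriodicPt_pow_iff.mpr hl).iterate_mod_apply k).symm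

theorem pow_pow_two_eq_self {m n : ℕ} (hgcd : Nat.gcd m n = 1) (h4 : l ^ q ^ (4 * m) = l)
    (h1 : (l ^ q ^ n) ^ q ^ n = l) (h2 : l ^ q ^ (3 * m) = (l ^ q ^ n) ^ q ^ (m + n)) :
    l ^ q ^ 2 = l := by
  have h2n : l ^ q ^ (2 * n) = l := by rw [two_mul, pow_add, pow_mul, h1]
  have h3m : l ^ q ^ (3 * m) = l ^ q ^ m := by
    rw [h2, ← pow_mul, ← pow_add, show n + (m + n) = 2 * n + m by ring, pow_add, pow_mul, h2n]
  have h2m : l ^ q ^ (2 * m) = l := by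
    calc l ^ q ^ (2 * m) = (l ^ q ^ (3 * m)) ^ q ^ m := by
          rw [h3m, ← pow_mul, ← pow_add, two_mul]
      _ = l := by rw [← pow_mul, ← pow_add, show 3 * m + m = 4 * m by ring, h4]
  have := (isPeriodicPt_pow_iff.mpr h2n).gcd (isPeriodicPt_pow_iff.mpr h2m)
  rwa [Nat.gcd_mul_left, Nat.gcd_comm, hgcd, mul_one, isPeriodicPt_pow_iff] at this

end Periodic

section Bierbrauer

/-- The exponent `q^t = p^{g t}` of `x ↦ x^{q^t}` on `𝔽_{q^{4m}}`, read in `ZMod (g * (4 * m))`. -/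
def qIdx (g m t : ℕ) : ZMod (g * (4 * m)) := ((g * t : ℕ) : ZMod (g * (4 * m)))

variable {g m : ℕ}

theorem qIdx_add (s t : ℕ) : qIdx g m s + qIdx g m t = qIdx g m (s + t) := by
  simp only [qIdx]
  push_cast
  ring

theorem qIdx_eq_qIdx_iff (hg : 0 < g) {s t : ℕ} :
    qIdx g m s = qIdx g m t ↔ (4 * m : ℤ) ∣ (t : ℤ) - s := by
  rw [qIdx, qIdx, ZMod.natCast_eq_natCast_iff, Nat.ModEq.mul_left_cancel_iff' hg.ne',
    Nat.modEq_iff_dvd]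
  push_cast
  rfl

theorem four_dvd_sub_of_qIdx_eq (hg : 0 < g) {s t : ℕ} (h : qIdx g m s = qIdx g m t) :
    (4 : ℤ) ∣ (t : ℤ) - s :=
  (dvd_mul_right 4 (m : ℤ)).trans ((qIdx_eq_qIdx_iff hg).mp h)

theorem sub_eq_zero_or_of_qIdx_eq (hg : 0 < g) {s t : ℕ} (h : qIdx g m s = qIdx g m t) :
    (t : ℤ) - s = 0 ∨ 4 * m ≤ (t : ℤ) - s ∨ (t : ℤ) - s ≤ -(4 * m) := by
  obtain ⟨k, hk⟩ := (qIdx_eq_qIdx_iff hg).mp h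
  rw [hk]
  rcases lt_trichotomy k 0 with hk0 | rfl | hk0
  · exact Or.inr (Or.inr (by nlinarith))
  · simp
  · exact Or.inr (Or.inl (by nlinarith))

/-- Every condition is a congruence modulo `4m` that fails by parity (`n` even, `m` odd) or by
size (`0 < n < 4m`). -/
theorem admissibleExponents_qIdx {n : ℕ} (hg : 0 < g) (hm : Odd m) (hn : Even n) (hn0 : 0 < n)
    (hn4 : n < 4 * m) :
    AdmissibleExponents (qIdx g m n) (qIdx g m (3 * m)) (qIdx g m (m + n)) := by
  obtain ⟨k, rfl⟩ := hm
  obtain ⟨j, rfl⟩ := hn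
  have h0 : (0 : ZMod (g * (4 * (2 * k + 1)))) = qIdx g (2 * k + 1) 0 := by simp [qIdx]
  refine ⟨?_, ?_, ?_, ?_, ?_, ?_, ?_, ?_, ?_, fun h => ?_⟩ <;> simp only [h0, qIdx_add] at *
  any_goals
    intro h
    have := four_dvd_sub_of_qIdx_eq hg h
    have := sub_eq_zero_or_of_qIdx_eq hg h
    omega
  have := sub_eq_zero_or_of_qIdx_eq hg h
  rw [show 3 * (2 * k + 1) = 2 * k + 1 + (j + j) by omega]

variable {p n : ℕ} [Fact p.Prime]

theorem two_ne_zero_of_odd {R : Type*} [Ring R] [Nontrivial R] [CharP R p] (hp : Odd p) :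
    (2 : R) ≠ 0 :=
  Ring.two_ne_zero (by rw [ringChar.eq R p]; rintro rfl; exact (by decide : ¬ Odd 2) hp)

theorem bierMul_mul_left (hm : Odd m) (hn : Even n) {l : GaloisField p (g * (4 * m))}
    (hl : l ^ (p ^ g) ^ 2 = l) (v x y : GaloisField p (g * (4 * m))) :
    bierMul p g m n (p ^ g) v (l * x) y = bierMul p g m n (p ^ g) v x (l * y) := by
  simp only [bierMul, mul_pow, pow_pow_eq_pow_pow_mod_two hl n,
    pow_pow_eq_pow_pow_mod_two hl (3 * m), pow_pow_eq_pow_pow_mod_two hl (m + n),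
    Nat.even_iff.mp hn, Nat.odd_iff.mp (hm.add_even hn),
    Nat.odd_iff.mp ((by decide : Odd 3).mul hm), pow_zero, pow_one]
  ring

theorem bierMul_mul_right {l : GaloisField p (g * (4 * m))} (hl : l ^ p ^ g = l)
    (v x y : GaloisField p (g * (4 * m))) :
    l * bierMul p g m n (p ^ g) v x y = bierMul p g m n (p ^ g) v x (l * y) := by
  have hk : ∀ k, l ^ (p ^ g) ^ k = l := fun k => by
    have := (isPeriodicPt_pow_iff.mpr (by rwa [pow_one] : l ^ (p ^ g) ^ 1 = l)).mul_const k
    rwa [one_mul, isPeriodicPt_pow_iff] at this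
  simp only [bierMul, mul_pow, hk]
  ring

variable [NeZero (g * (4 * m))]

theorem pow_qIdx (x : GaloisField p (g * (4 * m))) (t : ℕ) :
    x ^ p ^ (qIdx g m t).val = x ^ (p ^ g) ^ t := by
  rw [qIdx, pow_pow_val_natCast (GaloisField.card p _ (NeZero.ne _)), pow_mul]

theorem pow_pow_four_mul_eq_self (l : GaloisField p (g * (4 * m))) :
    l ^ (p ^ g) ^ (4 * m) = l := by
  rw [← pow_mul, ← pow_pow_val_natCast (GaloisField.card p _ (NeZero.ne _)), ZMod.natCast_self,
    ZMod.val_zero, pow_zero, pow_one]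

theorem bierMul_eq_bilinearized (v x y : GaloisField p (g * (4 * m))) :
    bierMul p g m n (p ^ g) v x y =
      bilinearized p (starCoeff v (qIdx g m n) (qIdx g m (3 * m)) (qIdx g m (m + n))) x y := by
  rw [bilinearized_starCoeff, bierMul]
  simp only [pow_qIdx]

theorem bierMul_middle_nucleus (hp : Odd p) (hg : 0 < g) (hm : Odd m) (hn : Even n)
    (hn0 : 0 < n) (hn4 : n < 4 * m) (hgcd : Nat.gcd m n = 1) {v : GaloisField p (g * (4 * m))}
    (hv : v ≠ 0) :
    {ψ : GaloisField p (g * (4 * m)) →ₗ[ZMod p] GaloisField p (g * (4 * m)) |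
        ∀ y, ∃ z, ∀ x, bierMul p g m n (p ^ g) v (ψ x) y = bierMul p g m n (p ^ g) v x z} =
      {ψ | ∃ l, l ^ (p ^ g) ^ 2 = l ∧ ∀ x, ψ x = l * x} := by
  ext ψ
  constructor
  · intro hψ
    obtain ⟨l, hl, h1, h2⟩ := (admissibleExponents_qIdx hg hm hn hn0 hn4).exists_eq_mul_of_middle
      (GaloisField.card p _ (NeZero.ne _)) hv (two_ne_zero_of_odd hp) ψ
      (by simpa only [Set.mem_ofPred_eq, bierMul_eq_bilinearized] using hψ)
    simp only [pow_qIdx] at h1 h2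
    exact ⟨l, pow_pow_two_eq_self hgcd (pow_pow_four_mul_eq_self l) h1 h2, hl⟩
  · rintro ⟨l, hl, hψ⟩ y
    exact ⟨l * y, fun x => by rw [hψ]; exact bierMul_mul_left hm hn hl v x y⟩

theorem bierMul_right_nucleus (hp : Odd p) (hg : 0 < g) (hm : Odd m) (hn : Even n)
    (hn0 : 0 < n) (hn4 : n < 4 * m) (hgcd : Nat.gcd m n = 1) {v : GaloisField p (g * (4 * m))}
    (hv : v ≠ 0) :
    {μ : GaloisField p (g * (4 * m)) →ₗ[ZMod p] GaloisField p (g * (4 * m)) |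
        ∀ y, ∃ z, ∀ x, μ (bierMul p g m n (p ^ g) v x y) = bierMul p g m n (p ^ g) v x z} =
      {μ | ∃ l, l ^ p ^ g = l ∧ ∀ x, μ x = l * x} := by
  ext μ
  constructor
  · intro hμ
    obtain ⟨l, hl, ⟨h1, h2⟩, h3⟩ :=
      (admissibleExponents_qIdx hg hm hn hn0 hn4).exists_eq_mul_of_right
        (GaloisField.card p _ (NeZero.ne _)) hv (two_ne_zero_of_odd hp) μ
        (by simpa only [Set.mem_ofPred_eq, bierMul_eq_bilinearized] using hμ)
    simp only [pow_qIdx] at h1 h2 h3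
    have hsq := pow_pow_two_eq_self hgcd (pow_pow_four_mul_eq_self l) h1 h2
    rw [pow_pow_eq_pow_pow_mod_two hsq, Nat.odd_iff.mp (hm.add_even hn), pow_one] at h3
    exact ⟨l, h3, hl⟩
  · rintro ⟨l, hl, hμ⟩ y
    exact ⟨l * y, fun x => by rw [hμ]; exact bierMul_mul_right hl v x y⟩

end Bierbrauer

theorem statement17_general (p g m n q : ℕ) [Fact p.Prime] (hp : Odd p) (hg : 0 < g)
    (hq : q = p ^ g) (hm : Odd m) (hn : Even n)
    (hn0 : 0 < n) (hn4 : n < 4 * m) (hgcd : Nat.gcd m n = 1)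
    -- `u` is a primitive element of `F_{q^{4m}}` and `v = u^{q^m − 1}`
    (u v : GaloisField p (g * (4 * m))) (hu0 : u ≠ 0)
    (hv : v = u ^ (q ^ m - 1)) :
    -- the middle-nucleus set is the set of scalar maps by elements of `F_{q²}`
    {ψ : GaloisField p (g * (4 * m)) →ₗ[ZMod p] GaloisField p (g * (4 * m)) |
        ∀ y, ∃ z, ∀ x, bierMul p g m n q v (ψ x) y = bierMul p g m n q v x z} =
      {ψ : GaloisField p (g * (4 * m)) →ₗ[ZMod p] GaloisField p (g * (4 * m)) |
        ∃ l : GaloisField p (g * (4 * m)), l ^ q ^ 2 = l ∧ ∀ x, ψ x = l * x} ∧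
    -- hence it has exactly q² elements
    Nat.card {ψ : GaloisField p (g * (4 * m)) →ₗ[ZMod p] GaloisField p (g * (4 * m)) |
        ∀ y, ∃ z, ∀ x, bierMul p g m n q v (ψ x) y = bierMul p g m n q v x z} = q ^ 2 ∧
    -- the right-nucleus set is the set of scalar maps by elements of `F_q`
    {μ : GaloisField p (g * (4 * m)) →ₗ[ZMod p] GaloisField p (g * (4 * m)) |
        ∀ y, ∃ z, ∀ x, μ (bierMul p g m n q v x y) = bierMul p g m n q v x z} =
      {μ : GaloisField p (g * (4 * m)) →ₗ[ZMod p] GaloisField p (g * (4 * m)) |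
        ∃ l : GaloisField p (g * (4 * m)), l ^ q = l ∧ ∀ x, μ x = l * x} ∧
    -- hence it has exactly q elements
    Nat.card {μ : GaloisField p (g * (4 * m)) →ₗ[ZMod p] GaloisField p (g * (4 * m)) |
        ∀ y, ∃ z, ∀ x, μ (bierMul p g m n q v x y) = bierMul p g m n q v x z} = q := by
  subst hq
  have : NeZero (g * (4 * m)) := ⟨by have := hm.pos; positivity⟩
  have hv0 : v ≠ 0 := hv ▸ pow_ne_zero _ hu0
  have hK : Nat.card (GaloisField p (g * (4 * m))) - 1 = (p ^ g) ^ (4 * m) - 1 := by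
    rw [GaloisField.card p _ (NeZero.ne _), pow_mul]
  have hq : 1 < p ^ g := Nat.one_lt_pow hg.ne' (Fact.out : p.Prime).one_lt
  have hmid := bierMul_middle_nucleus hp hg hm hn hn0 hn4 hgcd hv0
  have hright := bierMul_right_nucleus hp hg hm hn hn0 hn4 hgcd hv0
  refine ⟨hmid, ?_, hright, ?_⟩
  · rw [hmid, card_setOf_linearMap_eq_mul, card_setOf_pow_eq_self (by positivity)]
    rw [hK, show 4 * m = 2 * (2 * m) by ring, pow_mul]
    simpa using Nat.sub_dvd_pow_sub_pow ((p ^ g) ^ 2) 1 (2 * m)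
  · rw [hright, card_setOf_linearMap_eq_mul, card_setOf_pow_eq_self (by positivity)]
    rw [hK]
    simpa using Nat.sub_dvd_pow_sub_pow (p ^ g) 1 (4 * m)

theorem statement17 (p g m n q : ℕ) [Fact p.Prime] (hp : Odd p) (hg : 0 < g)
    (hq : q = p ^ g) (hq4 : q % 4 = 1) (hm : Odd m) (hn : Even n)
    (hn0 : 0 < n) (hn4 : n < 4 * m) (hgcd : Nat.gcd m n = 1)
    -- `u` is a primitive element of `F_{q^{4m}}` and `v = u^{q^m − 1}`
    (u v : GaloisField p (g * (4 * m))) (hu0 : u ≠ 0)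
    (huprim : ∀ x : GaloisField p (g * (4 * m)), x ≠ 0 → ∃ i : ℕ, x = u ^ i)
    (hv : v = u ^ (q ^ m - 1)) :
    -- the middle-nucleus set is the set of scalar maps by elements of `F_{q²}`
    {ψ : GaloisField p (g * (4 * m)) →ₗ[ZMod p] GaloisField p (g * (4 * m)) |
        ∀ y, ∃ z, ∀ x, bierMul p g m n q v (ψ x) y = bierMul p g m n q v x z} =
      {ψ : GaloisField p (g * (4 * m)) →ₗ[ZMod p] GaloisField p (g * (4 * m)) |
        ∃ l : GaloisField p (g * (4 * m)), l ^ q ^ 2 = l ∧ ∀ x, ψ x = l * x} ∧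
    -- hence it has exactly q² elements
    Nat.card {ψ : GaloisField p (g * (4 * m)) →ₗ[ZMod p] GaloisField p (g * (4 * m)) |
        ∀ y, ∃ z, ∀ x, bierMul p g m n q v (ψ x) y = bierMul p g m n q v x z} = q ^ 2 ∧
    -- the right-nucleus set is the set of scalar maps by elements of `F_q`
    {μ : GaloisField p (g * (4 * m)) →ₗ[ZMod p] GaloisField p (g * (4 * m)) |
        ∀ y, ∃ z, ∀ x, μ (bierMul p g m n q v x y) = bierMul p g m n q v x z} =
      {μ : GaloisField p (g * (4 * m)) →ₗ[ZMod p] GaloisField p (g * (4 * m)) |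
        ∃ l : GaloisField p (g * (4 * m)), l ^ q = l ∧ ∀ x, μ x = l * x} ∧
    -- hence it has exactly q elements
    Nat.card {μ : GaloisField p (g * (4 * m)) →ₗ[ZMod p] GaloisField p (g * (4 * m)) |
        ∀ y, ∃ z, ∀ x, μ (bierMul p g m n q v x y) = bierMul p g m n q v x z} = q :=
  statement17_general p g m n q hp hg hq hm hn hn0 hn4 hgcd u v hu0 hv
end
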